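/- arXiv:2506.19829 — 6 statements merged into one kernel-verified Lean document; each statement's English description precedes it below -/
import Mathlib

section
/- Let M ∈ ℝ^{n×n} be Hurwitz, C ∈ ℝ^{p×n}, and V ∈ ℝ^{n×n} symmetric positive definite. Let S ∈ ℝ^{p̂×p} (p̂ ≤ p) be a row-selection matrix, i.e., every row of S is a standard basis vector of ℝ^p and the rows of S are pairwise distinct, and set Ĉ := S·C. Let W_C and W_Ĉ be the solutions of MᵀW_C + W_C M + CᵀC = 0 and MᵀW_Ĉ + W_Ĉ M + ĈᵀĈ = 0. Then W_Ĉ ⪯ W_C, hence tr(W_Ĉ V) ≤ tr(W_C V); moreover, if W_Ĉ is positive definite, then so is W_C and tr(W_Ĉ⁻¹ V⁻¹) ≥ tr(W_C⁻¹ V⁻¹). -/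
/-!
With `D = W_C - W_Ĉ` and `Q = CᵀC - ĈᵀĈ`, subtracting the two Lyapunov equations gives
`MᵀD + DM = -Q`, and `Q ⪰ 0` because `Ĉ` keeps only some of the rows of `C`. For Hurwitz `M`
the flow `t ↦ e^{tMᵀ} D e^{tM}` has derivative `-e^{tMᵀ} Q e^{tM} ⪯ 0` and tends to `0`, so
`D ⪰ 0`. The decay of `e^{tM}` comes from the spectral radius of `e^M` being `< 1`: every point
of its spectrum is `e^μ` for an eigenvalue `μ` of `M` (write `e^M` as a polynomial in `M`), so
Gelfand's formula makes `(e^M)^j → 0`. The trace inequalities follow from `tr(AB) ≥ 0` for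
`A, B ⪰ 0`, and the last one from the antitonicity of inversion on positive definite matrices.
-/

open Matrix MeasureTheory

/-- Spectral (ℓ² operator) norm of a real matrix. -/
noncomputable def specNorm {p q : Type*} [Fintype p] [Fintype q] [DecidableEq q]
    (M : Matrix p q ℝ) : ℝ :=
  ‖LinearMap.toContinuousLinearMap (Matrix.toEuclideanLin M)‖

/-- A real square matrix is Hurwitz if all of its eigenvalues over ℂ have negative real part. -/
def IsHurwitz {k : Type*} [Fintype k] [DecidableEq k] (M : Matrix k k ℝ) : Prop :=
  ∀ μ ∈ spectrum ℂ (M.map (Complex.ofReal ·)), μ.re < 0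

/-- Smallest (real) eigenvalue of a real matrix. -/
noncomputable def lamMin {k : Type*} [Fintype k] [DecidableEq k] (X : Matrix k k ℝ) : ℝ :=
  sInf (spectrum ℝ X)

/-- Largest (real) eigenvalue of a real matrix. -/
noncomputable def lamMax {k : Type*} [Fintype k] [DecidableEq k] (X : Matrix k k ℝ) : ℝ :=
  sSup (spectrum ℝ X)

open NormedSpace Filter Polynomial Topology
open scoped ComplexOrder Matrix.Norms.L2Operator

theorem tendsto_pow_atTop_nhds_zero_of_spectralRadius_lt_one {A : Type*} [NormedRing A]
    [NormedAlgebra ℂ A] [CompleteSpace A] {a : A} (ha : spectralRadius ℂ a < 1) :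
    Tendsto (fun k : ℕ => a ^ k) atTop (𝓝 0) := by
  obtain ⟨r, har, hr1⟩ := ENNReal.lt_iff_exists_nnreal_btwn.mp ha
  rw [tendsto_zero_iff_norm_tendsto_zero]
  refine squeeze_zero' (Eventually.of_forall fun _ => norm_nonneg _) ?_
    (tendsto_pow_atTop_nhds_zero_of_lt_one r.coe_nonneg (by exact_mod_cast hr1))
  have hgelfand := spectrum.pow_nnnorm_pow_one_div_tendsto_nhds_spectralRadius a
  filter_upwards [hgelfand.eventually_lt_const har, eventually_gt_atTop 0] with k hk hk0
  rw [one_div, ENNReal.rpow_inv_lt_iff (by positivity), ENNReal.rpow_natCast] at hk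
  exact_mod_cast hk.le

section Exponential

variable {𝕂 𝔸 : Type*} [RCLike 𝕂] [NormedRing 𝔸] [NormedAlgebra 𝕂 𝔸]

theorem exp_mul_eq_smul_of_mul_eq_smul [CompleteSpace 𝔸] {a x : 𝔸} {μ : 𝕂} (h : a * x = μ • x) :
    exp a * x = exp μ • x := by
  let _ : NormedAlgebra ℚ 𝔸 := NormedAlgebra.restrictScalars ℚ 𝕂 𝔸
  have hsemiconj : SemiconjBy x (algebraMap 𝕂 𝔸 μ) a := by
    rw [SemiconjBy, h, ← Algebra.commutes, Algebra.smul_def]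
  rw [← hsemiconj.exp_right.eq, ← algebraMap_exp_comm, ← Algebra.commutes, Algebra.smul_def]

variable (𝕂) in
theorem exists_aeval_eq_exp [FiniteDimensional 𝕂 𝔸] (a : 𝔸) : ∃ q : 𝕂[X], aeval a q = exp a := by
  let _ : Algebra ℚ 𝔸 := Algebra.compHom 𝔸 (algebraMap ℚ 𝕂)
  have hclosed : IsClosed (Algebra.adjoin 𝕂 {a} : Set 𝔸) :=
    Submodule.closed_of_finiteDimensional (Subalgebra.toSubmodule (Algebra.adjoin 𝕂 {a}))
  have := exp_mem (R := 𝕂) hclosed (Algebra.self_mem_adjoin_singleton 𝕂 a)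
  rwa [Algebra.adjoin_singleton_eq_range_aeval] at this

end Exponential

namespace Matrix

variable {k : Type*} [Fintype k] [DecidableEq k]

theorem exp_mulVec_of_mulVec_eq_smul {A : Matrix k k ℂ} {μ : ℂ} {v : k → ℂ}
    (hv : A *ᵥ v = μ • v) : exp A *ᵥ v = exp μ • v := by
  have hcol : A * replicateCol k v = μ • replicateCol k v := by
    rw [← replicateCol_mulVec, hv, replicateCol_smul]
  have := exp_mul_eq_smul_of_mul_eq_smul hcol
  rw [← replicateCol_mulVec, ← replicateCol_smul] at this
  ext i
  exact congrFun (congrFun this i) i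

theorem spectrum_exp_subset (A : Matrix k k ℂ) :
    spectrum ℂ (exp A) ⊆ Complex.exp '' spectrum ℂ A := by
  cases isEmpty_or_nonempty k
  · simp [spectrum.of_subsingleton]
  obtain ⟨q, hq⟩ := exists_aeval_eq_exp ℂ A
  rw [← hq, spectrum.map_polynomial_aeval]
  rintro _ ⟨μ, hμ, rfl⟩
  refine ⟨μ, hμ, ?_⟩
  rw [← spectrum_toLin', ← Module.End.hasEigenvalue_iff_mem_spectrum] at hμ
  obtain ⟨v, hv⟩ := hμ.exists_hasEigenvector
  have hq_v : aeval A q *ᵥ v = q.eval μ • v := by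
    have := Module.End.aeval_apply_of_hasEigenvector (p := q) hv
    rwa [show toLin' A = toLinAlgEquiv' A from rfl, aeval_algHom_apply,
      toLinAlgEquiv'_apply] at this
  have hexp_v : aeval A q *ᵥ v = Complex.exp μ • v := by
    rw [hq, exp_mulVec_of_mulVec_eq_smul (Module.End.mem_eigenspace_iff.mp hv.1),
      Complex.exp_eq_exp_ℂ]
  exact smul_left_injective ℂ hv.2 (hexp_v.symm.trans hq_v)

end Matrix

section Lyapunov

variable {k : Type*} [Fintype k] [DecidableEq k] {M : Matrix k k ℝ}

theorem IsHurwitz.spectralRadius_exp_lt_one [Nonempty k] (hM : IsHurwitz M) :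
    spectralRadius ℂ (exp (M.map (Complex.ofReal ·))) < 1 := by
  refine spectrum.spectralRadius_lt_of_forall_lt _ fun z hz => ?_
  obtain ⟨μ, hμ, rfl⟩ := Matrix.spectrum_exp_subset _ hz
  rw [← NNReal.coe_lt_coe, coe_nnnorm, Complex.norm_exp]
  exact Real.exp_lt_one_iff.mpr (hM μ hμ)

theorem IsHurwitz.tendsto_exp_pow (hM : IsHurwitz M) :
    Tendsto (fun j : ℕ => exp M ^ j) atTop (𝓝 0) := by
  cases isEmpty_or_nonempty k
  · simp [Subsingleton.elim _ (0 : Matrix k k ℝ)]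
  have hpow (j : ℕ) :
      exp (M.map (Complex.ofReal ·)) ^ j = (exp M ^ j).map (Complex.ofReal ·) := by
    let _ : NormedAlgebra ℚ (Matrix k k ℝ) := NormedAlgebra.restrictScalars ℚ ℝ _
    have := map_exp (Complex.ofRealHom.mapMatrix (m := k))
      (continuous_id.matrix_map Complex.continuous_ofReal) M
    exact this ▸ (map_pow Complex.ofRealHom.mapMatrix _ j).symm
  have hℂ := tendsto_pow_atTop_nhds_zero_of_spectralRadius_lt_one hM.spectralRadius_exp_lt_one
  have hre : Continuous fun X : Matrix k k ℂ => X.map Complex.re := by fun_prop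
  simpa [Function.comp_def, hpow] using (hre.tendsto 0).comp hℂ

theorem hasDerivAt_exp_transpose_mul_mul_exp (M X : Matrix k k ℝ) (t : ℝ) :
    HasDerivAt (fun s : ℝ => exp (s • Mᵀ) * X * exp (s • M))
      (exp (t • Mᵀ) * (Mᵀ * X + X * M) * exp (t • M)) t := by
  refine (((hasDerivAt_exp_smul_const Mᵀ t).mul_const X).mul
    (hasDerivAt_exp_smul_const' M t)).congr_deriv ?_
  noncomm_ring

theorem IsHurwitz.tendsto_exp_transpose_mul_mul_exp (hM : IsHurwitz M) (X : Matrix k k ℝ) :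
    Tendsto (fun j : ℕ => exp ((j : ℝ) • Mᵀ) * X * exp ((j : ℝ) • M)) atTop (𝓝 0) := by
  have hcongr : Tendsto (fun G : Matrix k k ℝ => Gᵀ * X * G) (𝓝 0) (𝓝 0) := by
    simpa using (show Continuous fun G : Matrix k k ℝ => Gᵀ * X * G by fun_prop).tendsto 0
  refine (hcongr.comp hM.tendsto_exp_pow).congr fun j => ?_
  rw [Function.comp_apply, ← Matrix.exp_nsmul, ← Nat.cast_smul_eq_nsmul ℝ, ← exp_transpose,
    transpose_smul]

theorem IsHurwitz.eq_zero_of_lyapunov (hM : IsHurwitz M) {E : Matrix k k ℝ}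
    (hE : Mᵀ * E + E * M = 0) : E = 0 := by
  have hderiv (t : ℝ) := hasDerivAt_exp_transpose_mul_mul_exp M E t
  simp only [hE, mul_zero, zero_mul] at hderiv
  have hconst := is_const_of_deriv_eq_zero (fun t => (hderiv t).differentiableAt)
    (fun t => (hderiv t).deriv)
  have := hM.tendsto_exp_transpose_mul_mul_exp E
  simp_rw [hconst _ 0, zero_smul, exp_zero, one_mul, mul_one] at this
  exact tendsto_nhds_unique tendsto_const_nhds this

theorem IsHurwitz.transpose_eq_of_lyapunov (hM : IsHurwitz M) {X Q : Matrix k k ℝ}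
    (hQ : Qᵀ = Q) (hX : Mᵀ * X + X * M = -Q) : Xᵀ = X := by
  have hXt : Mᵀ * Xᵀ + Xᵀ * M = -Q := by
    simpa [transpose_add, transpose_mul, hQ, add_comm] using congrArg transpose hX
  refine sub_eq_zero.mp (hM.eq_zero_of_lyapunov ?_)
  rw [mul_sub, sub_mul, sub_add_sub_comm, hXt, hX, sub_self]

theorem IsHurwitz.posSemidef_of_lyapunov (hM : IsHurwitz M) {X Q : Matrix k k ℝ}
    (hQ : Q.PosSemidef) (hX : Mᵀ * X + X * M = -Q) : X.PosSemidef := by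
  have hherm : X.IsHermitian := by
    rw [IsHermitian, conjTranspose_eq_transpose_of_trivial]
    exact hM.transpose_eq_of_lyapunov (by simpa using hQ.isHermitian.eq) hX
  refine .of_dotProduct_mulVec_nonneg hherm fun x => ?_
  let φ : Matrix k k ℝ →L[ℝ] ℝ := LinearMap.toContinuousLinearMap
    ((LinearMap.applyₗ x).comp ((LinearMap.applyₗ x).comp (Matrix.toLinearMap₂' ℝ).toLinearMap))
  have hφ (B : Matrix k k ℝ) : φ B = x ⬝ᵥ B *ᵥ x := Matrix.toLinearMap₂'_apply' B x x
  let f (t : ℝ) : ℝ := φ (exp (t • Mᵀ) * X * exp (t • M))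
  have hderiv (t : ℝ) : HasDerivAt f (φ (exp (t • Mᵀ) * (-Q) * exp (t • M))) t := by
    have h := φ.hasFDerivAt.comp_hasDerivAt t (hasDerivAt_exp_transpose_mul_mul_exp M X t)
    rwa [hX] at h
  have hderiv_nonpos (t : ℝ) : deriv f t ≤ 0 := by
    rw [(hderiv t).deriv, hφ, ← transpose_smul, exp_transpose, ← mulVec_mulVec, ← mulVec_mulVec,
      dotProduct_mulVec, vecMul_transpose, neg_mulVec, dotProduct_neg, neg_nonpos]
    simpa using hQ.dotProduct_mulVec_nonneg (exp (t • M) *ᵥ x)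
  have hanti : Antitone f :=
    antitone_of_deriv_nonpos (fun t => (hderiv t).differentiableAt) hderiv_nonpos
  have hlim : Tendsto (fun j : ℕ => f j) atTop (𝓝 0) := by
    have h := (φ.continuous.tendsto 0).comp (hM.tendsto_exp_transpose_mul_mul_exp X)
    rwa [map_zero] at h
  have hf0 : f 0 = x ⬝ᵥ X *ᵥ x := by simp [f, hφ]
  simpa [← hf0] using le_of_tendsto' hlim fun j => hanti j.cast_nonneg

end Lyapunov

namespace Matrix

variable {n 𝕜 : Type*} [Fintype n] [RCLike 𝕜]

theorem PosSemidef.trace_mul_nonneg {A B : Matrix n n 𝕜} (hA : A.PosSemidef)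
    (hB : B.PosSemidef) : 0 ≤ (A * B).trace := by
  classical
  open scoped MatrixOrder in
  obtain ⟨R, rfl⟩ := CStarAlgebra.nonneg_iff_eq_star_mul_self.mp hA.nonneg
  rw [star_eq_conjTranspose, Matrix.mul_assoc, trace_mul_comm]
  exact (hB.mul_mul_conjTranspose_same R).trace_nonneg

theorem PosDef.posSemidef_inv_sub_inv [DecidableEq n] {X Y : Matrix n n 𝕜} (hX : X.PosDef)
    (hXY : (Y - X).PosSemidef) : (X⁻¹ - Y⁻¹).PosSemidef := by
  have hY : Y.PosDef := by simpa using hX.add_posSemidef hXY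
  have hXdet := (isUnit_iff_isUnit_det X).mp hX.isUnit
  have hYdet := (isUnit_iff_isUnit_det Y).mp hY.isUnit
  have hK : (X⁻¹ - Y⁻¹)ᴴ = X⁻¹ - Y⁻¹ := (hX.inv.isHermitian.sub hY.inv.isHermitian).eq
  have key : X⁻¹ - Y⁻¹ = (X⁻¹ - Y⁻¹)ᴴ * X * (X⁻¹ - Y⁻¹) + (Y⁻¹)ᴴ * (Y - X) * Y⁻¹ := by
    rw [hK, hY.inv.isHermitian.eq]
    simp only [sub_mul, mul_sub, Matrix.mul_assoc, nonsing_inv_mul _ hXdet,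
      mul_nonsing_inv _ hXdet, nonsing_inv_mul _ hYdet, Matrix.mul_one, Matrix.one_mul]
    abel
  rw [key]
  exact (hX.posSemidef.conjTranspose_mul_mul_same _).add (hXY.conjTranspose_mul_mul_same _)

theorem posSemidef_conjTranspose_mul_self_sub_submatrix {m p : Type*} [Fintype m] [Fintype p]
    {g : m → p} (hg : Function.Injective g) (C : Matrix p n 𝕜) :
    (Cᴴ * C - (C.submatrix g id)ᴴ * C.submatrix g id).PosSemidef := by
  refine .of_dotProduct_mulVec_nonneg ((isHermitian_conjTranspose_mul_self C).sub
    (isHermitian_conjTranspose_mul_self _)) fun x => ?_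
  have hsub : C.submatrix g id *ᵥ x = (C *ᵥ x) ∘ g := rfl
  rw [sub_mulVec, dotProduct_sub, sub_nonneg, ← mulVec_mulVec, ← mulVec_mulVec,
    dotProduct_mulVec, vecMul_conjTranspose, dotProduct_mulVec (star x), vecMul_conjTranspose,
    star_star, hsub]
  exact (Finset.sum_map _ ⟨g, hg⟩ fun j => star ((C *ᵥ x) j) * (C *ᵥ x) j).symm.trans_le
    (Finset.sum_le_univ_sum_of_nonneg fun j => star_mul_self_nonneg _)

end Matrix

theorem stmt_4_general {n p phat : ℕ}
    (M : Matrix (Fin n) (Fin n) ℝ) (hM : IsHurwitz M)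
    (C : Matrix (Fin p) (Fin n) ℝ)
    (V : Matrix (Fin n) (Fin n) ℝ) (hV : V.PosDef)
    (S : Matrix (Fin phat) (Fin p) ℝ)
    (g : Fin phat → Fin p) (hg : Function.Injective g)
    (hS : S = Matrix.of fun i j => if g i = j then (1 : ℝ) else 0)
    (Chat : Matrix (Fin phat) (Fin n) ℝ) (hChat : Chat = S * C)
    (WC WChat : Matrix (Fin n) (Fin n) ℝ)
    (hWC : Mᵀ * WC + WC * M + Cᵀ * C = 0)
    (hWChat : Mᵀ * WChat + WChat * M + Chatᵀ * Chat = 0) :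
    (WC - WChat).PosSemidef ∧ (WChat * V).trace ≤ (WC * V).trace ∧
      (WChat.PosDef → WC.PosDef ∧ (WChat⁻¹ * V⁻¹).trace ≥ (WC⁻¹ * V⁻¹).trace) := by
  have hChat_sub : Chat = C.submatrix g id := by
    ext i j
    simp [hChat, hS, mul_apply]
  have hQ : (Cᵀ * C - Chatᵀ * Chat).PosSemidef := by
    simpa [hChat_sub] using posSemidef_conjTranspose_mul_self_sub_submatrix hg C
  have hD : Mᵀ * (WC - WChat) + (WC - WChat) * M = -(Cᵀ * C - Chatᵀ * Chat) := by
    calc _ = (Mᵀ * WC + WC * M + Cᵀ * C) - (Mᵀ * WChat + WChat * M + Chatᵀ * Chat)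
          - (Cᵀ * C - Chatᵀ * Chat) := by noncomm_ring
      _ = _ := by rw [hWC, hWChat, sub_self, zero_sub]
  have hDpsd : (WC - WChat).PosSemidef := hM.posSemidef_of_lyapunov hQ hD
  refine ⟨hDpsd, ?_, fun hWChat_pd => ⟨by simpa using hWChat_pd.add_posSemidef hDpsd, ?_⟩⟩
  · simpa [sub_mul] using hDpsd.trace_mul_nonneg hV.posSemidef
  · simpa [sub_mul] using
      (hWChat_pd.posSemidef_inv_sub_inv hDpsd).trace_mul_nonneg hV.inv.posSemidef

/-- Proposition 2: robustness to a subset of the adversary's sensors. -/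
theorem stmt_4 {n p phat : ℕ} (hpp : phat ≤ p)
    (M : Matrix (Fin n) (Fin n) ℝ) (hM : IsHurwitz M)
    (C : Matrix (Fin p) (Fin n) ℝ)
    (V : Matrix (Fin n) (Fin n) ℝ) (hV : V.PosDef)
    (S : Matrix (Fin phat) (Fin p) ℝ)
    (g : Fin phat → Fin p) (hg : Function.Injective g)
    (hS : S = Matrix.of fun i j => if g i = j then (1 : ℝ) else 0)
    (Chat : Matrix (Fin phat) (Fin n) ℝ) (hChat : Chat = S * C)
    (WC WChat : Matrix (Fin n) (Fin n) ℝ)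
    (hWC : Mᵀ * WC + WC * M + Cᵀ * C = 0)
    (hWChat : Mᵀ * WChat + WChat * M + Chatᵀ * Chat = 0) :
    (WC - WChat).PosSemidef ∧ (WChat * V).trace ≤ (WC * V).trace ∧
      (WChat.PosDef → WC.PosDef ∧ (WChat⁻¹ * V⁻¹).trace ≥ (WC⁻¹ * V⁻¹).trace) :=
  stmt_4_general M hM C V hV S g hg hS Chat hChat WC WChat hWC hWChat
end

section
/- Let M ∈ ℝ^{n×n} be Hurwitz and D ∈ ℝ^{n×n} be symmetric positive definite, and let W be the solution of the Lyapunov equation MᵀW + WM + D = 0. Then W is symmetric positive definite, the matrix Y := W⁻¹ satisfies the Riccati-type equation Y·Mᵀ + M·Y + Y·D·Y = 0, and every eigenvalue of M + W⁻¹D (over ℂ) has positive real part. -/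
open Matrix MeasureTheory

/-!
The Cayley transform `A = (1 + M)(1 - M)⁻¹` turns the Lyapunov equation `MᵀW + WM + D = 0` into
the Stein equation `W = AᵀWA + E` with `E = 2 (1 - M)⁻ᵀ D (1 - M)⁻¹ ≻ 0`, and maps the open left
half-plane into the open unit disc, so by Gelfand's formula `Aᴺ → 0`. Iterating the Stein
equation, `W - Wᵀ = (Aᴺ)ᵀ(W - Wᵀ)Aᴺ → 0`, and the quadratic form `x ↦ xᵀWx` decreases along
orbits `Aᵏx → 0`, hence is nonnegative, and `xᵀWx = (Ax)ᵀW(Ax) + xᵀEx > 0` for `x ≠ 0`.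
Finally `W (M + W⁻¹D) = -MᵀW`, so `M + W⁻¹D` is similar to `-Mᵀ`; the Riccati identity is the
Lyapunov equation multiplied by `W⁻¹` on both sides.
-/

open Filter Topology

theorem Complex.norm_lt_one_of_mul_one_sub_eq_one_add {μ ν : ℂ} (hν : ν.re < 0)
    (h : μ * (1 - ν) = 1 + ν) : ‖μ‖ < 1 := by
  have hlt : ‖1 + ν‖ < ‖1 - ν‖ := by
    rw [← sq_lt_sq₀ (norm_nonneg _) (norm_nonneg _), Complex.sq_norm, Complex.sq_norm,
      Complex.normSq_apply, Complex.normSq_apply]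
    simp only [Complex.add_re, Complex.sub_re, Complex.add_im, Complex.sub_im, Complex.one_re,
      Complex.one_im]
    nlinarith
  have hpos : 0 < ‖1 - ν‖ := (norm_nonneg _).trans_lt hlt
  rw [← h, norm_mul] at hlt
  exact (mul_lt_iff_lt_one_left hpos).1 hlt

theorem spectrum.exists_mul_one_sub_eq_one_add {A : Type*} [Ring A] [Algebra ℂ A] {a m : A}
    (hm : IsUnit (1 - m)) (ham : a * (1 - m) = 1 + m) {μ : ℂ} (hμ : μ ∈ spectrum ℂ a) :
    ∃ ν ∈ spectrum ℂ m, μ * (1 - ν) = 1 + ν := by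
  have key : (algebraMap ℂ A μ - a) * (1 - m) = algebraMap ℂ A (μ - 1) - (μ + 1) • m := by
    rw [sub_mul, ham, mul_sub, mul_one, ← Algebra.smul_def, map_sub, map_one, add_smul, one_smul]
    abel
  rw [spectrum.mem_iff, ← Units.isUnit_mul_units _ hm.unit, IsUnit.unit_spec, key] at hμ
  have hμ1 : μ + 1 ≠ 0 := by
    rintro h
    rw [h, zero_smul, sub_zero, show μ - 1 = -2 by linear_combination h] at hμ
    exact hμ ((isUnit_iff_ne_zero.2 (by norm_num)).map _)
  refine ⟨(μ - 1) / (μ + 1), fun hν => hμ ?_, by field_simp; ring⟩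
  convert ((isUnit_iff_ne_zero.2 hμ1).map (algebraMap ℂ A)).mul hν using 1
  rw [mul_sub, ← map_mul, mul_div_cancel₀ _ hμ1, Algebra.smul_def]

theorem spectrum.tendsto_pow_atTop_nhds_zero {A : Type*} [NormedRing A] [NormedAlgebra ℂ A]
    [CompleteSpace A] {a : A} (h : ∀ μ ∈ spectrum ℂ a, ‖μ‖ < 1) :
    Tendsto (a ^ ·) atTop (𝓝 0) := by
  nontriviality A
  have hρ : spectralRadius ℂ a < 1 := by
    simpa using spectrum.spectralRadius_lt_of_forall_lt a (r := 1)
      fun μ hμ => NNReal.coe_lt_coe.1 (h μ hμ)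
  obtain ⟨r, hr0, hρr, hr1⟩ := ENNReal.lt_iff_exists_real_btwn.1 hρ
  have hbound : ∀ᶠ n : ℕ in atTop, ‖a ^ n‖ ≤ r ^ n := by
    filter_upwards [(spectrum.pow_norm_pow_one_div_tendsto_nhds_spectralRadius a)
      |>.eventually_lt_const hρr, eventually_ne_atTop 0] with n hn hn0
    rw [ENNReal.ofReal_lt_ofReal_iff', one_div] at hn
    calc ‖a ^ n‖ = (‖a ^ n‖ ^ (n⁻¹ : ℝ)) ^ n :=
          (Real.rpow_inv_natCast_pow (norm_nonneg _) hn0).symm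
      _ ≤ r ^ n := pow_le_pow_left₀ (by positivity) hn.1.le n
  exact squeeze_zero_norm' hbound
    (tendsto_pow_atTop_nhds_zero_of_lt_one hr0 (by simpa using hr1))

namespace Matrix

section Stein

variable {n : Type*} [Fintype n] [DecidableEq n] {A : Matrix n n ℝ}

theorem eq_transpose_pow_mul_mul_pow {S : Matrix n n ℝ} (hS : S = Aᵀ * S * A) (N : ℕ) :
    S = (A ^ N)ᵀ * S * A ^ N := by
  induction N with
  | zero => simp
  | succ N ih =>
    conv_lhs => rw [ih, hS]
    simp only [pow_succ', transpose_mul, Matrix.mul_assoc]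

theorem eq_zero_of_eq_transpose_mul_mul (hA : Tendsto (A ^ ·) atTop (𝓝 0)) {S : Matrix n n ℝ}
    (hS : S = Aᵀ * S * A) : S = 0 := by
  have hlim : Tendsto (fun N => (A ^ N)ᵀ * S * A ^ N) atTop (𝓝 ((0 : Matrix n n ℝ)ᵀ * S * 0)) :=
    ((continuous_id.matrix_transpose.tendsto 0).comp hA |>.mul tendsto_const_nhds).mul hA
  rw [mul_zero] at hlim
  exact tendsto_nhds_unique (tendsto_const_nhds.congr (eq_transpose_pow_mul_mul_pow hS)) hlim

theorem dotProduct_mulVec_nonneg_of_tendsto_pow (hA : Tendsto (A ^ ·) atTop (𝓝 0))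
    {W : Matrix n n ℝ} (hW : ∀ x, (A *ᵥ x) ⬝ᵥ W *ᵥ (A *ᵥ x) ≤ x ⬝ᵥ W *ᵥ x) (x : n → ℝ) :
    0 ≤ x ⬝ᵥ W *ᵥ x := by
  have hanti : Antitone fun k : ℕ => (A ^ k *ᵥ x) ⬝ᵥ W *ᵥ (A ^ k *ᵥ x) :=
    antitone_nat_of_succ_le fun k => by
      simpa only [pow_succ', ← mulVec_mulVec] using hW (A ^ k *ᵥ x)
  have horbit : Tendsto (fun k : ℕ => A ^ k *ᵥ x) atTop (𝓝 0) := by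
    have := ((continuous_id.matrix_mulVec (continuous_const (y := x))).tendsto 0).comp hA
    rwa [id, zero_mulVec] at this
  have hlim : Tendsto (fun k : ℕ => (A ^ k *ᵥ x) ⬝ᵥ W *ᵥ (A ^ k *ᵥ x)) atTop (𝓝 0) := by
    have hq : Continuous fun y : n → ℝ => y ⬝ᵥ W *ᵥ y :=
      continuous_id.dotProduct (continuous_const.matrix_mulVec continuous_id)
    have := (hq.tendsto 0).comp horbit
    rwa [zero_dotProduct] at this
  simpa using hanti.le_of_tendsto hlim 0

theorem posDef_of_eq_transpose_mul_mul_add (hA : Tendsto (A ^ ·) atTop (𝓝 0))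
    {W E : Matrix n n ℝ} (hE : E.PosDef) (hW : W = Aᵀ * W * A + E) : W.PosDef := by
  have hEt : Eᵀ = E := by simpa using hE.isHermitian.eq
  have hWt : Wᵀ = W := by
    refine (sub_eq_zero.1 (eq_zero_of_eq_transpose_mul_mul hA ?_)).symm
    conv_lhs => rw [hW]
    rw [transpose_add, transpose_mul, transpose_mul, transpose_transpose, hEt]
    noncomm_ring
  have hquad : ∀ x, x ⬝ᵥ W *ᵥ x = (A *ᵥ x) ⬝ᵥ W *ᵥ (A *ᵥ x) + x ⬝ᵥ E *ᵥ x := by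
    intro x
    conv_lhs => rw [hW]
    rw [add_mulVec, dotProduct_add, ← mulVec_mulVec, ← mulVec_mulVec, dotProduct_mulVec x,
      vecMul_transpose]
  have hnonneg := dotProduct_mulVec_nonneg_of_tendsto_pow hA (W := W) fun x => by
    rw [hquad x]
    simpa using hE.posSemidef.dotProduct_mulVec_nonneg x
  refine .of_dotProduct_mulVec_pos (by simpa [IsHermitian] using hWt) fun x hx => ?_
  have hEx := hE.dotProduct_mulVec_pos hx
  rw [star_trivial] at hEx ⊢
  linarith [hquad x, hnonneg (A *ᵥ x)]

end Stein

section Cayley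

variable {n R : Type*} [Fintype n] [DecidableEq n] [CommRing R]

theorem spectrum_transpose (X : Matrix n n R) : spectrum R Xᵀ = spectrum R X := by
  ext μ
  rw [spectrum.mem_iff, spectrum.mem_iff, ← isUnit_transpose, transpose_sub, transpose_transpose,
    algebraMap_eq_diagonal, diagonal_transpose]

noncomputable def cayley (M : Matrix n n R) : Matrix n n R := (1 + M) * (1 - M)⁻¹

theorem cayley_mul_one_sub {M : Matrix n n R} (hM : IsUnit (1 - M)) :
    cayley M * (1 - M) = 1 + M := by
  rw [cayley, Matrix.mul_assoc, nonsing_inv_mul _ ((isUnit_iff_isUnit_det _).1 hM), Matrix.mul_one]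

theorem eq_cayley_transpose_mul_mul_add {M W D : Matrix n n R} (hM : IsUnit (1 - M))
    (hW : Mᵀ * W + W * M + D = 0) :
    W = (cayley M)ᵀ * W * cayley M + (1 - M)⁻¹ᵀ * (2 • D) * (1 - M)⁻¹ := by
  have hC : (1 - M) * (1 - M)⁻¹ = 1 := mul_nonsing_inv _ ((isUnit_iff_isUnit_det _).1 hM)
  obtain rfl : D = -(Mᵀ * W + W * M) := eq_neg_of_add_eq_zero_right hW
  rw [cayley]
  set C := (1 - M)⁻¹
  calc W = ((1 - M) * C)ᵀ * W * ((1 - M) * C) := by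
        rw [hC, transpose_one, Matrix.one_mul, Matrix.mul_one]
    _ = _ := by
      simp only [transpose_mul, transpose_sub, transpose_add, transpose_one]
      noncomm_ring

end Cayley

end Matrix

namespace IsHurwitz

variable {n : Type*} [Fintype n] [DecidableEq n] {M : Matrix n n ℝ}

theorem isUnit_one_sub_mapMatrix (hM : IsHurwitz M) :
    IsUnit (1 - Complex.ofRealHom.mapMatrix M) := by
  have h1 : (1 : ℂ) ∉ spectrum ℂ (Complex.ofRealHom.mapMatrix M) := fun h =>
    absurd (hM 1 h) (by norm_num)
  simpa using spectrum.notMem_iff.1 h1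

theorem isUnit_one_sub (hM : IsHurwitz M) : IsUnit (1 - M) := by
  have h := hM.isUnit_one_sub_mapMatrix
  rw [← map_one Complex.ofRealHom.mapMatrix, ← map_sub, isUnit_iff_isUnit_det, ← RingHom.map_det,
    isUnit_map_iff] at h
  exact (isUnit_iff_isUnit_det _).2 h

attribute [local instance] Matrix.linftyOpNormedRing Matrix.linftyOpNormedAlgebra in
theorem tendsto_cayley_pow (hM : IsHurwitz M) : Tendsto (cayley M ^ ·) atTop (𝓝 0) := by
  set φ : Matrix n n ℝ →+* Matrix n n ℂ := Complex.ofRealHom.mapMatrix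
  have hφ : φ (cayley M) * (1 - φ M) = 1 + φ M := by
    simpa using congrArg φ (cayley_mul_one_sub hM.isUnit_one_sub)
  have hlim := spectrum.tendsto_pow_atTop_nhds_zero (a := φ (cayley M)) fun μ hμ => by
    obtain ⟨ν, hν, h⟩ :=
      spectrum.exists_mul_one_sub_eq_one_add hM.isUnit_one_sub_mapMatrix hφ hμ
    exact Complex.norm_lt_one_of_mul_one_sub_eq_one_add (hM ν hν) h
  have hre := ((continuous_id.matrix_map Complex.continuous_re).tendsto 0).comp hlim
  convert hre using 2 with N
  · rw [Function.comp_apply, id, ← map_pow]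
    ext
    simp [φ]
  · simp

end IsHurwitz

theorem spectrum_map_ofReal_add_inv_mul {n : Type*} [Fintype n] [DecidableEq n]
    {M D W : Matrix n n ℝ} (hW : Mᵀ * W + W * M + D = 0) (hWu : IsUnit W) :
    spectrum ℂ ((M + W⁻¹ * D).map (Complex.ofReal ·)) =
      -spectrum ℂ (M.map (Complex.ofReal ·)) := by
  have hsim : M + W⁻¹ * D = W⁻¹ * -Mᵀ * W := by
    have hMW : -(Mᵀ * W) = W * M + D := by
      rw [neg_eq_iff_add_eq_zero, ← hW, add_assoc]
    rw [Matrix.mul_assoc, Matrix.neg_mul, hMW, Matrix.mul_add, ← Matrix.mul_assoc,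
      nonsing_inv_mul _ ((isUnit_iff_isUnit_det _).1 hWu), Matrix.one_mul]
  set u : (Matrix n n ℂ)ˣ := Units.map Complex.ofRealHom.mapMatrix.toMonoidHom hWu.unit
  have hconj : (M + W⁻¹ * D).map (Complex.ofReal ·) =
      (↑u⁻¹ : Matrix n n ℂ) * -(M.map (Complex.ofReal ·))ᵀ * (u : Matrix n n ℂ) := by
    rw [hsim, Units.coe_map_inv]
    change Complex.ofRealHom.mapMatrix _ = _
    simp only [u, Matrix.coe_units_inv, Units.coe_map, IsUnit.unit_spec, map_mul, map_neg]
    rw [← transpose_map]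
    rfl
  rw [hconj, spectrum.units_conjugate', ← spectrum.neg_eq, spectrum_transpose]

/-- the inverse of a Lyapunov solution solves a Riccati-type equation,
and the stabilizing-type spectral property holds. -/
theorem stmt_6 {n : ℕ} (M D : Matrix (Fin n) (Fin n) ℝ)
    (hM : IsHurwitz M) (hD : D.PosDef)
    (W : Matrix (Fin n) (Fin n) ℝ) (hW : Mᵀ * W + W * M + D = 0) :
    W.PosDef ∧
      W⁻¹ * Mᵀ + M * W⁻¹ + W⁻¹ * D * W⁻¹ = 0 ∧
      (∀ μ ∈ spectrum ℂ ((M + W⁻¹ * D).map (Complex.ofReal ·)), 0 < μ.re) := by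
  have hunit := hM.isUnit_one_sub
  have hE : ((1 - M)⁻¹ᵀ * (2 • D) * (1 - M)⁻¹).PosDef := by
    simpa [conjTranspose_eq_transpose_of_trivial] using
      (hD.smul (by norm_num : (0 : ℕ) < 2)).conjTranspose_mul_mul_same
        (mulVec_injective_of_isUnit (isUnit_nonsing_inv_iff.2 hunit))
  have hWpd : W.PosDef := posDef_of_eq_transpose_mul_mul_add hM.tendsto_cayley_pow hE
    (eq_cayley_transpose_mul_mul_add hunit hW)
  have hWdet : IsUnit W.det := hWpd.det_pos.ne'.isUnit
  refine ⟨hWpd, ?_, fun μ hμ => ?_⟩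
  · calc W⁻¹ * Mᵀ + M * W⁻¹ + W⁻¹ * D * W⁻¹ = W⁻¹ * (Mᵀ * W + W * M + D) * W⁻¹ := by
          simp only [Matrix.mul_add, Matrix.add_mul, Matrix.mul_assoc, mul_nonsing_inv _ hWdet,
            Matrix.mul_one]
          rw [← Matrix.mul_assoc W⁻¹ W, nonsing_inv_mul _ hWdet, Matrix.one_mul]
      _ = 0 := by rw [hW, Matrix.mul_zero, Matrix.zero_mul]
  · rw [spectrum_map_ofReal_add_inv_mul hW ((isUnit_iff_isUnit_det _).2 hWdet)] at hμ
    simpa using hM _ hμ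
end

section
/- Let M ∈ ℝ^{n×n} be Hurwitz and D ∈ ℝ^{n×n} be symmetric positive definite, and let W be the (positive definite) solution of the Lyapunov equation MᵀW + WM + D = 0. Then W⁻¹ is the maximal positive semidefinite solution of the equation Y·Mᵀ + M·Y + Y·D·Y = 0: every symmetric positive semidefinite Ŷ ∈ ℝ^{n×n} satisfying Ŷ·Mᵀ + M·Ŷ + Ŷ·D·Ŷ = 0 satisfies Ŷ ⪯ W⁻¹. -/
open Matrix MeasureTheory

/-!
Put `P = W - W Ŷ W`. The Lyapunov equation for `W` and the Riccati equation for `Ŷ` combine to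
`Mᵀ P + P M + Q = 0` with `Q = (1 - W Ŷ) D (1 - Ŷ W) ⪰ 0`, and `W⁻¹ - Ŷ = W⁻¹ P W⁻¹`, so it suffices
to show `P ⪰ 0`. Along a trajectory `y = e^{tM} x`, the derivative of `yᵀ P y` is `-yᵀ Q y ≤ 0`, so
`xᵀ P x` dominates every later value. The derivative of `yᵀ W y` is `-yᵀ D y ≤ -c yᵀ W y`, so
`yᵀ W y` decays exponentially, and with it `yᵀ P y`, which is bounded by a multiple of `yᵀ W y`.
Hence `xᵀ P x ≥ 0`.
-/

open NormedSpace Filter Topology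
open scoped MatrixOrder

theorem hasDerivAt_star_exp_smul_mul_mul_exp_smul {𝔸 : Type*} [NormedRing 𝔸] [NormedAlgebra ℝ 𝔸]
    [CompleteSpace 𝔸] [StarRing 𝔸] [StarModule ℝ 𝔸] [ContinuousStar 𝔸] (a s : 𝔸) (t : ℝ) :
    HasDerivAt (fun t : ℝ => star (exp (t • a)) * s * exp (t • a))
      (star (exp (t • a)) * (star a * s + s * a) * exp (t • a)) t := by
  have h := ((hasDerivAt_exp_smul_const' a t).star.mul_const s).mul (hasDerivAt_exp_smul_const' a t)
  rw [star_mul] at h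
  exact h.congr_deriv (by noncomm_ring)

theorem le_mul_exp_neg_mul_of_hasDerivAt {g g' : ℝ → ℝ} {c : ℝ}
    (hg : ∀ t, HasDerivAt g (g' t) t) (hg' : ∀ t, g' t ≤ -c * g t) {t : ℝ} (ht : 0 ≤ t) :
    g t ≤ g 0 * Real.exp (-c * t) := by
  have hanti : Antitone fun t => g t * Real.exp (c * t) := by
    refine antitone_of_hasDerivAt_nonpos
      (fun t => (hg t).mul ((hasDerivAt_id t).const_mul c).exp) fun t => ?_
    simp only [mul_one, id, Pi.zero_apply]
    nlinarith [hg' t, Real.exp_pos (c * t)]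
  calc g t = g t * Real.exp (c * t) * Real.exp (-c * t) := by
        rw [mul_assoc, ← Real.exp_add, neg_mul, add_neg_cancel, Real.exp_zero, mul_one]
    _ ≤ g 0 * Real.exp (-c * t) := by
        gcongr
        simpa using hanti ht

theorem tendsto_zero_of_hasDerivAt_le_neg_mul {g g' : ℝ → ℝ} {c : ℝ} (hc : 0 < c)
    (hg : ∀ t, HasDerivAt g (g' t) t) (hg' : ∀ t, g' t ≤ -c * g t) (hg0 : ∀ t, 0 ≤ g t) :
    Tendsto g atTop (𝓝 0) := by
  have hexp : Tendsto (fun t => g 0 * Real.exp (-c * t)) atTop (𝓝 0) := by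
    simpa using (Real.tendsto_exp_atBot.comp
      (tendsto_id.const_mul_atTop_of_neg (neg_neg_of_pos hc))).const_mul (g 0)
  refine tendsto_of_tendsto_of_tendsto_of_le_of_le' tendsto_const_nhds hexp
    (Eventually.of_forall hg0) ?_
  filter_upwards [eventually_ge_atTop 0] with t ht
  exact le_mul_exp_neg_mul_of_hasDerivAt hg hg' ht

theorem riccati_lyapunov_identity {R : Type*} [Ring R] {N M W D Y : R}
    (hW : N * W + W * M + D = 0) (hY : Y * N + M * Y + Y * D * Y = 0) :
    N * (W - W * Y * W) + (W - W * Y * W) * M + (1 - W * Y) * D * (1 - Y * W) = 0 := by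
  have h : N * (W - W * Y * W) + (W - W * Y * W) * M + (1 - W * Y) * D * (1 - Y * W) =
      (N * W + W * M + D) - (N * W + W * M + D) * (Y * W) - (W * Y) * (N * W + W * M + D) +
        W * (Y * N + M * Y + Y * D * Y) * W := by
    noncomm_ring
  rw [h, hW, hY]
  simp

namespace Matrix

variable {ι : Type*} [Fintype ι]

theorem dotProduct_mulVec_le_of_le {A B : Matrix ι ι ℝ} (h : A ≤ B) (x : ι → ℝ) :
    x ⬝ᵥ (A *ᵥ x) ≤ x ⬝ᵥ (B *ᵥ x) := by
  have := (le_iff.1 h).dotProduct_mulVec_nonneg x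
  rwa [star_trivial, sub_mulVec, dotProduct_sub, sub_nonneg] at this

variable [DecidableEq ι]

theorem PosDef.exists_pos_le_smul {W S : Matrix ι ι ℝ} (hW : W.PosDef) (hS : S.IsHermitian) :
    ∃ C : ℝ, 0 < C ∧ S ≤ C • W := by
  rcases subsingleton_or_nontrivial (Matrix ι ι ℝ) with _ | _
  · exact ⟨1, one_pos, (Subsingleton.elim _ _).le⟩
  obtain ⟨r, hr, hrW⟩ : ∃ r > 0, algebraMap ℝ _ r ≤ W :=
    (CFC.exists_pos_algebraMap_le_iff hW.isHermitian).2 fun _ hx =>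
      (isStrictlyPositive_iff_posDef.2 hW).spectrum_pos hx
  obtain ⟨c, hc⟩ := S.finite_spectrum.bddAbove
  have hc1 : 0 < max c 1 := lt_max_of_lt_right one_pos
  refine ⟨max c 1 / r, by positivity, ?_⟩
  calc S ≤ algebraMap ℝ _ (max c 1) :=
        le_algebraMap_of_spectrum_le (fun x hx => (hc hx).trans (le_max_left c 1)) hS.isSelfAdjoint
    _ = (max c 1 / r) • algebraMap ℝ _ r := by
      rw [Algebra.smul_def, ← map_mul, div_mul_cancel₀ _ hr.ne']
    _ ≤ (max c 1 / r) • W := by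
      rw [le_iff, ← smul_sub]
      exact (le_iff.1 hrW).smul (by positivity)

section Flow

open scoped Matrix.Norms.L2Operator

theorem _root_.HasDerivAt.dotProduct_mulVec {F : ℝ → Matrix ι ι ℝ} {F' : Matrix ι ι ℝ} {t : ℝ}
    (hF : HasDerivAt F F' t) (x y : ι → ℝ) :
    HasDerivAt (fun t => x ⬝ᵥ (F t *ᵥ y)) (x ⬝ᵥ (F' *ᵥ y)) t := by
  let L : Matrix ι ι ℝ →ₗ[ℝ] ℝ :=
    { toFun := fun A => x ⬝ᵥ (A *ᵥ y)
      map_add' := fun A B => by simp only [add_mulVec, dotProduct_add]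
      map_smul' := fun c A => by simp only [smul_mulVec, dotProduct_smul, RingHom.id_apply] }
  exact L.toContinuousLinearMap.hasFDerivAt.comp_hasDerivAt t hF

noncomputable def quadFormAlongFlow (M S : Matrix ι ι ℝ) (x : ι → ℝ) (t : ℝ) : ℝ :=
  x ⬝ᵥ (((exp (t • M))ᵀ * S * exp (t • M)) *ᵥ x)

variable {M S S' : Matrix ι ι ℝ} {x : ι → ℝ} {t : ℝ}

theorem quadFormAlongFlow_zero : quadFormAlongFlow M S x 0 = x ⬝ᵥ (S *ᵥ x) := by
  simp [quadFormAlongFlow]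

theorem quadFormAlongFlow_smul (c : ℝ) :
    quadFormAlongFlow M (c • S) x t = c * quadFormAlongFlow M S x t := by
  simp [quadFormAlongFlow, smul_mulVec]

theorem quadFormAlongFlow_neg : quadFormAlongFlow M (-S) x t = -quadFormAlongFlow M S x t := by
  simp [quadFormAlongFlow, neg_mulVec]

theorem quadFormAlongFlow_mono (h : S ≤ S') :
    quadFormAlongFlow M S x t ≤ quadFormAlongFlow M S' x t := by
  have h' := star_left_conjugate_le_conjugate h (exp (t • M))
  rw [star_eq_conjTranspose, conjTranspose_eq_transpose_of_trivial] at h'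
  exact dotProduct_mulVec_le_of_le h' x

theorem quadFormAlongFlow_nonneg (hS : S.PosSemidef) : 0 ≤ quadFormAlongFlow M S x t := by
  simpa [quadFormAlongFlow] using quadFormAlongFlow_mono (M := M) (x := x) (t := t) hS.nonneg

theorem hasDerivAt_quadFormAlongFlow :
    HasDerivAt (quadFormAlongFlow M S x) (quadFormAlongFlow M (Mᵀ * S + S * M) x t) t := by
  have h := hasDerivAt_star_exp_smul_mul_mul_exp_smul M S t
  simp only [star_eq_conjTranspose, conjTranspose_eq_transpose_of_trivial] at h
  exact h.dotProduct_mulVec x x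

variable {W D P : Matrix ι ι ℝ}

theorem tendsto_quadFormAlongFlow_of_lyapunov (hW : W.PosDef) (hD : D.PosDef)
    (hWD : Mᵀ * W + W * M + D = 0) (x : ι → ℝ) :
    Tendsto (quadFormAlongFlow M W x) atTop (𝓝 0) := by
  obtain ⟨C, hC, hWC⟩ := hD.exists_pos_le_smul hW.isHermitian
  refine tendsto_zero_of_hasDerivAt_le_neg_mul (inv_pos.2 hC)
    (fun t => hasDerivAt_quadFormAlongFlow) (fun t => ?_)
    (fun t => quadFormAlongFlow_nonneg hW.posSemidef)
  have hdecay := quadFormAlongFlow_mono (M := M) (x := x) (t := t) hWC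
  rw [quadFormAlongFlow_smul] at hdecay
  rwa [eq_neg_of_add_eq_zero_left hWD, quadFormAlongFlow_neg, neg_mul, neg_le_neg_iff,
    inv_mul_le_iff₀ hC]

theorem tendsto_quadFormAlongFlow_of_isHermitian (hW : W.PosDef) (hD : D.PosDef)
    (hWD : Mᵀ * W + W * M + D = 0) (hP : P.IsHermitian) (x : ι → ℝ) :
    Tendsto (quadFormAlongFlow M P x) atTop (𝓝 0) := by
  obtain ⟨K, -, hPK⟩ := hW.exists_pos_le_smul hP
  obtain ⟨K', -, hPK'⟩ := hW.exists_pos_le_smul hP.neg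
  have hWx := tendsto_quadFormAlongFlow_of_lyapunov hW hD hWD x
  refine tendsto_of_tendsto_of_tendsto_of_le_of_le (by simpa using (hWx.const_mul K').neg)
    (by simpa using hWx.const_mul K) (fun t => ?_) (fun t => ?_)
  · have h := quadFormAlongFlow_mono (M := M) (x := x) (t := t) hPK'
    rw [quadFormAlongFlow_neg, quadFormAlongFlow_smul] at h
    exact neg_le.1 h
  · have h := quadFormAlongFlow_mono (M := M) (x := x) (t := t) hPK
    rwa [quadFormAlongFlow_smul] at h

end Flow

theorem PosSemidef.of_lyapunov {M W D P Q : Matrix ι ι ℝ} (hW : W.PosDef) (hD : D.PosDef)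
    (hWD : Mᵀ * W + W * M + D = 0) (hP : P.IsHermitian) (hQ : Q.PosSemidef)
    (hPQ : Mᵀ * P + P * M + Q = 0) : P.PosSemidef := by
  refine .of_dotProduct_mulVec_nonneg hP fun x => ?_
  have hanti : Antitone (quadFormAlongFlow M P x) := by
    refine antitone_of_hasDerivAt_nonpos (fun t => hasDerivAt_quadFormAlongFlow) fun t => ?_
    rw [eq_neg_of_add_eq_zero_left hPQ, Pi.zero_apply, quadFormAlongFlow_neg, neg_nonpos]
    exact quadFormAlongFlow_nonneg hQ
  simpa [quadFormAlongFlow_zero] using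
    hanti.le_of_tendsto (tendsto_quadFormAlongFlow_of_isHermitian hW hD hWD hP x) 0

end Matrix

theorem stmt_7_general {n : ℕ} (M D : Matrix (Fin n) (Fin n) ℝ)
    (hD : D.PosDef)
    (W : Matrix (Fin n) (Fin n) ℝ) (hWpd : W.PosDef)
    (hW : Mᵀ * W + W * M + D = 0) :
    ∀ Yhat : Matrix (Fin n) (Fin n) ℝ, Yhat.PosSemidef →
      Yhat * Mᵀ + M * Yhat + Yhat * D * Yhat = 0 → (W⁻¹ - Yhat).PosSemidef := by
  intro Yhat hY hRic
  have hWh : Wᴴ = W := hWpd.isHermitian.eq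
  have hYh : Yhatᴴ = Yhat := hY.isHermitian.eq
  have hWinv : W⁻¹ - Yhat = (W⁻¹)ᴴ * (W - W * Yhat * W) * W⁻¹ := by
    have hdet : IsUnit W.det := hWpd.det_pos.ne'.isUnit
    rw [hWpd.isHermitian.inv.eq]
    calc W⁻¹ - Yhat = W⁻¹ * W * W⁻¹ - (W⁻¹ * W) * Yhat * (W * W⁻¹) := by
          rw [nonsing_inv_mul _ hdet, mul_nonsing_inv _ hdet, Matrix.one_mul, Matrix.one_mul,
            Matrix.mul_one]
      _ = W⁻¹ * (W - W * Yhat * W) * W⁻¹ := by noncomm_ring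
  have hP : (W - W * Yhat * W).IsHermitian := by
    have hWYW := isHermitian_conjTranspose_mul_mul W hY.isHermitian
    rw [hWh] at hWYW
    exact hWpd.isHermitian.sub hWYW
  have hQ := hD.posSemidef.conjTranspose_mul_mul_same (1 - Yhat * W)
  rw [conjTranspose_sub, conjTranspose_one, conjTranspose_mul, hWh, hYh] at hQ
  have hPpsd := PosSemidef.of_lyapunov hWpd hD hW hP hQ (riccati_lyapunov_identity hW hRic)
  rw [hWinv]
  exact hPpsd.conjTranspose_mul_mul_same _

/-- W⁻¹ is the maximal PSD solution of the Riccati-type equation. -/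
theorem stmt_7 {n : ℕ} (M D : Matrix (Fin n) (Fin n) ℝ)
    (hM : IsHurwitz M) (hD : D.PosDef)
    (W : Matrix (Fin n) (Fin n) ℝ) (hWpd : W.PosDef)
    (hW : Mᵀ * W + W * M + D = 0) :
    ∀ Yhat : Matrix (Fin n) (Fin n) ℝ, Yhat.PosSemidef →
      Yhat * Mᵀ + M * Yhat + Yhat * D * Yhat = 0 → (W⁻¹ - Yhat).PosSemidef :=
  stmt_7_general M D hD W hWpd hW
end

section
/- Let M ∈ ℝ^{n×n} be an arbitrary square matrix, D ∈ ℝ^{n×n} symmetric positive definite, and Y ∈ ℝ^{n×n} symmetric positive semidefinite such that −Y·Mᵀ − M·Y − Y·D·Y ⪰ 0. Then ‖Y‖ ≤ 2‖M‖ / λmin(D). -/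
open Matrix MeasureTheory

/-!
Let `λ = λmax(Y)` and let `v ≠ 0` be an eigenvector, `Y v = λ v`. Since `Y` is symmetric, testing
the Riccati inequality against `v` collapses it to `0 ≤ -2λ vᵀMv - λ² vᵀDv`. Bounding
`|vᵀMv| ≤ ‖M‖ vᵀv` and `vᵀDv ≥ λmin(D) vᵀv` gives `λ · λmin(D) ≤ 2‖M‖`, while `‖Y‖ ≤ λ` because
`0 ≤ Y ≤ λ · 1`.
-/

namespace Matrix

section Riccati

variable {ι R : Type*} [Fintype ι] [CommRing R]

theorem dotProduct_riccati_mulVec {M D Y : Matrix ι ι R} (hY : Yᵀ = Y) {v : ι → R} {μ : R}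
    (hv : Y *ᵥ v = μ • v) :
    v ⬝ᵥ (-(Y * Mᵀ) - M * Y - Y * D * Y) *ᵥ v
      = -(2 * μ * (v ⬝ᵥ M *ᵥ v)) - μ ^ 2 * (v ⬝ᵥ D *ᵥ v) := by
  have hYv : ∀ w, v ⬝ᵥ Y *ᵥ w = μ * (v ⬝ᵥ w) := fun w ↦ by
    rw [dotProduct_mulVec, ← mulVec_transpose, hY, hv, smul_dotProduct, smul_eq_mul]
  have hMt : v ⬝ᵥ Mᵀ *ᵥ v = v ⬝ᵥ M *ᵥ v := by
    rw [mulVec_transpose, dotProduct_comm, ← dotProduct_mulVec]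
  simp only [sub_mulVec, neg_mulVec, ← mulVec_mulVec, dotProduct_sub, dotProduct_neg, hv,
    mulVec_smul, dotProduct_smul, hYv, hMt, smul_eq_mul]
  ring

end Riccati

variable {ι : Type*} [Fintype ι] [DecidableEq ι]

theorem exists_mulVec_eq_smul_of_mem_spectrum {K : Type*} [Field K] {A : Matrix ι ι K} {μ : K}
    (h : μ ∈ spectrum K A) : ∃ v ≠ 0, A *ᵥ v = μ • v := by
  rw [← spectrum_toLin', ← Module.End.hasEigenvalue_iff_mem_spectrum] at h
  obtain ⟨v, hv⟩ := h.exists_hasEigenvector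
  exact ⟨v, hv.2, by simpa using Module.End.mem_eigenspace_iff.1 hv.1⟩

theorem IsHermitian.posSemidef_sub_smul_one {A : Matrix ι ι ℝ} (hA : A.IsHermitian) {c : ℝ}
    (hc : ∀ μ ∈ spectrum ℝ A, c ≤ μ) : (A - c • 1).PosSemidef := by
  rw [posSemidef_iff_isHermitian_and_spectrum_nonneg]
  refine ⟨hA.sub (isHermitian_one.smul (.all c)), ?_⟩
  rw [← Algebra.algebraMap_eq_smul_one, ← spectrum.sub_singleton_eq]
  rintro _ ⟨μ, hμ, _, rfl, rfl⟩
  simpa using hc μ hμ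

theorem IsHermitian.posSemidef_smul_one_sub {A : Matrix ι ι ℝ} (hA : A.IsHermitian) {c : ℝ}
    (hc : ∀ μ ∈ spectrum ℝ A, μ ≤ c) : (c • 1 - A).PosSemidef := by
  rw [posSemidef_iff_isHermitian_and_spectrum_nonneg]
  refine ⟨(isHermitian_one.smul (.all c)).sub hA, ?_⟩
  rw [← Algebra.algebraMap_eq_smul_one, ← spectrum.singleton_sub_eq]
  rintro _ ⟨_, rfl, μ, hμ, rfl⟩
  simpa using hc μ hμ

theorem lamMin_le_of_mem_spectrum {A : Matrix ι ι ℝ} {μ : ℝ} (h : μ ∈ spectrum ℝ A) :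
    lamMin A ≤ μ :=
  csInf_le A.finite_real_spectrum.bddBelow h

theorem le_lamMax_of_mem_spectrum {A : Matrix ι ι ℝ} {μ : ℝ} (h : μ ∈ spectrum ℝ A) :
    μ ≤ lamMax A :=
  le_csSup A.finite_real_spectrum.bddAbove h

theorem IsHermitian.lamMin_mem_spectrum [Nonempty ι] {A : Matrix ι ι ℝ} (hA : A.IsHermitian) :
    lamMin A ∈ spectrum ℝ A := by
  refine Set.Nonempty.csInf_mem ?_ A.finite_real_spectrum
  rw [hA.spectrum_real_eq_range_eigenvalues]
  exact Set.range_nonempty _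

theorem IsHermitian.lamMax_mem_spectrum [Nonempty ι] {A : Matrix ι ι ℝ} (hA : A.IsHermitian) :
    lamMax A ∈ spectrum ℝ A := by
  refine Set.Nonempty.csSup_mem ?_ A.finite_real_spectrum
  rw [hA.spectrum_real_eq_range_eigenvalues]
  exact Set.range_nonempty _

theorem PosDef.lamMin_pos [Nonempty ι] {A : Matrix ι ι ℝ} (hA : A.PosDef) : 0 < lamMin A := by
  obtain ⟨i, hi⟩ : lamMin A ∈ Set.range hA.1.eigenvalues :=
    hA.1.spectrum_real_eq_range_eigenvalues ▸ hA.1.lamMin_mem_spectrum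
  exact hi ▸ hA.eigenvalues_pos i

theorem PosSemidef.lamMax_nonneg {A : Matrix ι ι ℝ} (hA : A.PosSemidef) : 0 ≤ lamMax A :=
  Real.sSup_nonneg fun _ hμ ↦ (posSemidef_iff_isHermitian_and_spectrum_nonneg.1 hA).2 hμ

theorem IsHermitian.lamMin_mul_dotProduct_self_le {A : Matrix ι ι ℝ} (hA : A.IsHermitian)
    (x : ι → ℝ) : lamMin A * (x ⬝ᵥ x) ≤ x ⬝ᵥ A *ᵥ x := by
  have := (hA.posSemidef_sub_smul_one fun _ ↦ lamMin_le_of_mem_spectrum).dotProduct_mulVec_nonneg x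
  simpa [sub_mulVec, smul_mulVec, dotProduct_sub, dotProduct_smul] using this

theorem IsHermitian.dotProduct_mulVec_le_lamMax_mul {A : Matrix ι ι ℝ} (hA : A.IsHermitian)
    (x : ι → ℝ) : x ⬝ᵥ A *ᵥ x ≤ lamMax A * (x ⬝ᵥ x) := by
  have := (hA.posSemidef_smul_one_sub fun _ ↦ le_lamMax_of_mem_spectrum).dotProduct_mulVec_nonneg x
  simpa [sub_mulVec, smul_mulVec, dotProduct_sub, dotProduct_smul] using this

open scoped Matrix.Norms.L2Operator RealInnerProductSpace

theorem abs_dotProduct_mulVec_le (A : Matrix ι ι ℝ) (x : ι → ℝ) :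
    |x ⬝ᵥ A *ᵥ x| ≤ ‖A‖ * (x ⬝ᵥ x) := by
  set y : EuclideanSpace ℝ ι := WithLp.toLp 2 x
  have hy : x ⬝ᵥ x = ‖y‖ ^ 2 := by
    rw [← real_inner_self_eq_norm_sq, EuclideanSpace.inner_toLp_toLp, star_trivial]
  calc |x ⬝ᵥ A *ᵥ x| = |⟪y, toEuclideanCLM (𝕜 := ℝ) A y⟫| := by rw [inner_toEuclideanCLM]
    _ ≤ ‖y‖ * ‖toEuclideanCLM (𝕜 := ℝ) A y‖ := abs_real_inner_le_norm _ _
    _ ≤ ‖y‖ * (‖A‖ * ‖y‖) := by gcongr; exact (toEuclideanCLM (𝕜 := ℝ) A).le_opNorm y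
    _ = ‖A‖ * (x ⬝ᵥ x) := by rw [hy]; ring

theorem PosSemidef.norm_le_lamMax {A : Matrix ι ι ℝ} (hA : A.PosSemidef) : ‖A‖ ≤ lamMax A := by
  have hsymm : (toEuclideanCLM (𝕜 := ℝ) A).IsSymmetric := isSymmetric_toEuclideanLin_iff.2 hA.1
  rw [← l2_opNorm_toEuclideanCLM, ContinuousLinearMap.norm_eq_iSup_rayleighQuotient _ hsymm]
  refine ciSup_le fun y ↦ ?_
  have hq : ⟪toEuclideanCLM (𝕜 := ℝ) A y, y⟫ = y.ofLp ⬝ᵥ A *ᵥ y.ofLp := by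
    rw [real_inner_comm, inner_toEuclideanCLM]
  have hy : ‖y‖ ^ 2 = y.ofLp ⬝ᵥ y.ofLp := by
    rw [← real_inner_self_eq_norm_sq, EuclideanSpace.inner_eq_star_dotProduct, star_trivial]
  have hq_nonneg : 0 ≤ y.ofLp ⬝ᵥ A *ᵥ y.ofLp := by
    simpa using hA.dotProduct_mulVec_nonneg y.ofLp
  simp only [ContinuousLinearMap.rayleighQuotient, ContinuousLinearMap.reApplyInnerSelf_apply,
    RCLike.re_to_real, hq]
  rw [abs_of_nonneg (div_nonneg hq_nonneg (sq_nonneg _))]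
  exact div_le_of_le_mul₀ (sq_nonneg _) hA.lamMax_nonneg
    (hy ▸ hA.1.dotProduct_mulVec_le_lamMax_mul _)

theorem mul_lamMin_le_of_posSemidef_riccati {M D Y : Matrix ι ι ℝ} (hY : Y.IsHermitian)
    (hD : D.IsHermitian) (hineq : (-(Y * Mᵀ) - M * Y - Y * D * Y).PosSemidef) {v : ι → ℝ}
    {μ : ℝ} (hv0 : v ≠ 0) (hμ : 0 ≤ μ) (hv : Y *ᵥ v = μ • v) :
    μ * lamMin D ≤ 2 * ‖M‖ := by
  have hs : 0 < v ⬝ᵥ v := by simpa using dotProduct_star_self_pos_iff.2 hv0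
  have hR : 0 ≤ -(2 * μ * (v ⬝ᵥ M *ᵥ v)) - μ ^ 2 * (v ⬝ᵥ D *ᵥ v) := by
    simpa [dotProduct_riccati_mulVec (isHermitian_iff_isSymm.1 hY).eq hv] using
      hineq.dotProduct_mulVec_nonneg v
  have hMv : -(‖M‖ * (v ⬝ᵥ v)) ≤ v ⬝ᵥ M *ᵥ v := neg_le_of_abs_le (abs_dotProduct_mulVec_le M v)
  have hDv : lamMin D * (v ⬝ᵥ v) ≤ v ⬝ᵥ D *ᵥ v := hD.lamMin_mul_dotProduct_self_le v
  rcases hμ.eq_or_lt with rfl | hμ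
  · simp
  refine le_of_mul_le_mul_left ?_ (mul_pos hμ hs)
  nlinarith [mul_le_mul_of_nonneg_left hDv (sq_nonneg μ), mul_le_mul_of_nonneg_left hMv hμ.le]

end Matrix

open scoped Matrix.Norms.L2Operator

/-- norm bound for PSD solutions of a Riccati-type inequality. -/
theorem stmt_8 {n : ℕ} (M D Y : Matrix (Fin n) (Fin n) ℝ)
    (hD : D.PosDef) (hY : Y.PosSemidef)
    (hineq : (-(Y * Mᵀ) - M * Y - Y * D * Y).PosSemidef) :
    specNorm Y ≤ 2 * specNorm M / lamMin D := by
  rcases isEmpty_or_nonempty (Fin n) with _ | _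
  · simp [specNorm, Subsingleton.elim Y 0, Subsingleton.elim M 0]
  obtain ⟨v, hv0, hv⟩ := exists_mulVec_eq_smul_of_mem_spectrum hY.1.lamMax_mem_spectrum
  calc specNorm Y ≤ lamMax Y := hY.norm_le_lamMax
    _ ≤ 2 * specNorm M / lamMin D := (le_div_iff₀ hD.lamMin_pos).2 <|
      mul_lamMin_le_of_posSemidef_riccati hY.1 hD.1 hineq hv0 hY.lamMax_nonneg hv
end

section
/- Let M₀ ∈ ℝ^{n×n} and Δ ∈ ℝ^{n×n} with both M₀ and M := M₀ + Δ Hurwitz, let D ∈ ℝ^{n×n} be symmetric, and let V₀ ∈ ℝ^{n×n} be symmetric. Let W solve MᵀW + WM + D = 0, let W⁰ solve M₀ᵀW⁰ + W⁰M₀ + D = 0, and let Z solve M₀Z + Z·M₀ᵀ + V₀ = 0. Then tr(W·V₀) = tr(W⁰·V₀) + tr(Z·(WΔ + ΔᵀW)). -/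
open Matrix MeasureTheory

/-- perturbation identity for traces of Lyapunov solutions. -/
theorem stmt_11 {n : ℕ} (M₀ Δ : Matrix (Fin n) (Fin n) ℝ)
    (hM₀ : IsHurwitz M₀) (hM : IsHurwitz (M₀ + Δ))
    (D V₀ : Matrix (Fin n) (Fin n) ℝ) (hD : D.IsHermitian) (hV₀ : V₀.IsHermitian)
    (W W0 Z : Matrix (Fin n) (Fin n) ℝ)
    (hW : (M₀ + Δ)ᵀ * W + W * (M₀ + Δ) + D = 0)
    (hW0 : M₀ᵀ * W0 + W0 * M₀ + D = 0)
    (hZ : M₀ * Z + Z * M₀ᵀ + V₀ = 0) :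
    (W * V₀).trace = (W0 * V₀).trace + (Z * (W * Δ + Δᵀ * W)).trace := by
  have hV : V₀ = -(M₀ * Z + Z * M₀ᵀ) := eq_neg_of_add_eq_zero_right hZ
  have h2 : M₀ᵀ * (W - W0) + (W - W0) * M₀ + (Δᵀ * W + W * Δ) = 0 := by
    have h : M₀ᵀ * (W - W0) + (W - W0) * M₀ + (Δᵀ * W + W * Δ)
        = ((M₀ + Δ)ᵀ * W + W * (M₀ + Δ) + D) - (M₀ᵀ * W0 + W0 * M₀ + D) := by
      simp only [transpose_add, add_mul, mul_add, mul_sub, sub_mul]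
      abel
    rw [h, hW, hW0, sub_zero]
  have hE : M₀ᵀ * (W - W0) + (W - W0) * M₀ = -(Δᵀ * W + W * Δ) :=
    eq_neg_of_add_eq_zero_left h2
  have step : ((W - W0) * V₀).trace = (Z * (W * Δ + Δᵀ * W)).trace := by
    calc ((W - W0) * V₀).trace
        = -(((W - W0) * M₀ * Z).trace + ((W - W0) * Z * M₀ᵀ).trace) := by
          rw [hV]
          simp [mul_add, mul_neg, trace_add, trace_neg, Matrix.mul_assoc]
      _ = -(((W - W0) * M₀ * Z).trace + (M₀ᵀ * (W - W0) * Z).trace) := by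
          rw [Matrix.trace_mul_cycle (W - W0) Z M₀ᵀ]
      _ = -(((M₀ᵀ * (W - W0) + (W - W0) * M₀) * Z).trace) := by
          rw [add_mul, trace_add]; ring
      _ = -((-(Δᵀ * W + W * Δ) * Z).trace) := by rw [hE]
      _ = ((Δᵀ * W + W * Δ) * Z).trace := by rw [neg_mul, trace_neg, neg_neg]
      _ = (Z * (W * Δ + Δᵀ * W)).trace := by
          rw [Matrix.trace_mul_comm, mul_add, mul_add, add_comm (Z * (Δᵀ * W))]
  have expand : (W * V₀).trace = (W0 * V₀).trace + ((W - W0) * V₀).trace := by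
    rw [sub_mul, trace_sub]; ring
  rw [expand, step]
end

section
/- Suppose K ∈ ℝ^{m×n} is such that A + BK is Hurwitz and P ∈ ℝ^{n×n} is symmetric and satisfies (A+BK)ᵀP + P(A+BK) + Q + KᵀRK = 0. Then the difference P̃ := P − P⋆ satisfies the Lyapunov equation (A+BK)ᵀP̃ + P̃(A+BK) + (K−K⋆)ᵀR(K−K⋆) = 0, and consequently P ⪰ P⋆. -/
/-!
Completing the square with `R K⋆ = -Bᵀ P⋆` turns the difference of the closed-loop Lyapunov
equation for `P` and the Riccati equation for `P⋆` into a Lyapunov equation for `P - P⋆` whose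
constant term `(K - K⋆)ᵀ R (K - K⋆)` is positive semidefinite.

If `M` is Hurwitz and `Mᵀ X + X M + C = 0` with `C ⪰ 0`, then along `x(t) = e^{tM} v` the
function `x(t)ᵀ X x(t)` has derivative `-x(t)ᵀ C x(t) ≤ 0` and tends to `0`, because `e^{tM} v`
decays (on each generalized eigenspace of `M` it is `e^{tμ}` times a polynomial in `t`, with
`Re μ < 0`). Hence `vᵀ X v ≥ 0`.
-/

open Matrix MeasureTheory

open Filter Topology NormedSpace Finset

theorem Complex.tendsto_exp_mul_mul_pow {μ : ℂ} (hμ : μ.re < 0) (j : ℕ) :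
    Tendsto (fun t : ℝ => Complex.exp (t * μ) * (t : ℂ) ^ j) atTop (𝓝 0) := by
  rw [tendsto_zero_iff_norm_tendsto_zero]
  refine (tendsto_rpow_mul_exp_neg_mul_atTop_nhds_zero j (-μ.re) (neg_pos.2 hμ)).congr' ?_
  filter_upwards [eventually_ge_atTop 0] with t ht
  simp [Complex.norm_exp, Real.rpow_natCast, abs_of_nonneg ht, mul_comm]

section Derivatives

variable {𝕜 ι : Type*} [NontriviallyNormedField 𝕜] [Fintype ι] {t : 𝕜}

theorem HasDerivAt.dotProduct {x y : 𝕜 → ι → 𝕜} {x' y' : ι → 𝕜} (hx : HasDerivAt x x' t)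
    (hy : HasDerivAt y y' t) :
    HasDerivAt (fun s => x s ⬝ᵥ y s) (x' ⬝ᵥ y t + x t ⬝ᵥ y') t := by
  unfold _root_.dotProduct
  rw [← Finset.sum_add_distrib]
  exact HasDerivAt.fun_sum fun i _ => (hasDerivAt_pi.1 hx i).mul (hasDerivAt_pi.1 hy i)

theorem HasDerivAt.const_mulVec {x : 𝕜 → ι → 𝕜} {x' : ι → 𝕜} (X : Matrix ι ι 𝕜)
    (hx : HasDerivAt x x' t) : HasDerivAt (fun s => X *ᵥ x s) (X *ᵥ x') t :=
  hasDerivAt_pi.2 fun i => HasDerivAt.fun_sum fun j _ => (hasDerivAt_pi.1 hx j).const_mul (X i j)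

end Derivatives

namespace Matrix

variable {ι : Type*} [Fintype ι] [DecidableEq ι]

theorem exp_mulVec_eq_sum_of_pow_mulVec_eq_zero {N : Matrix ι ι ℂ} {x : ι → ℂ} {k : ℕ}
    (hk : N ^ k *ᵥ x = 0) :
    exp N *ᵥ x = ∑ j ∈ range k, (j.factorial⁻¹ : ℂ) • (N ^ j *ᵥ x) := by
  let _ : NormedRing (Matrix ι ι ℂ) := Matrix.linftyOpNormedRing
  let _ : NormedAlgebra ℂ (Matrix ι ι ℂ) := Matrix.linftyOpNormedAlgebra
  let L : Matrix ι ι ℂ →L[ℂ] ι → ℂ :=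
    LinearMap.toContinuousLinearMap ((LinearMap.applyₗ x).comp toLin'.toLinearMap)
  have hL : ∀ E, L E = E *ᵥ x := fun E => toLin'_apply E x
  have hsum := (exp_series_hasSum_exp' (𝕂 := ℂ) N).mapL L
  simp only [hL, smul_mulVec] at hsum
  refine hsum.unique (hasSum_sum_of_ne_finset_zero fun j hj => ?_)
  rw [← Nat.sub_add_cancel (not_lt.1 (mem_range.not.1 hj)), pow_add, ← mulVec_mulVec, hk,
    mulVec_zero, smul_zero]

theorem exp_smul_one (c : ℂ) : exp (c • (1 : Matrix ι ι ℂ)) = Complex.exp c • 1 := by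
  rw [smul_one_eq_diagonal, smul_one_eq_diagonal, exp_diagonal, Pi.exp_def, Complex.exp_eq_exp_ℂ]

theorem exp_smul_mulVec_of_pow_sub_smul_mulVec_eq_zero {M : Matrix ι ι ℂ} {μ : ℂ}
    {x : ι → ℂ} {k : ℕ} (hk : (M - μ • 1) ^ k *ᵥ x = 0) (z : ℂ) :
    exp (z • M) *ᵥ x =
      ∑ j ∈ range k, (Complex.exp (z * μ) * z ^ j / j.factorial) • ((M - μ • 1) ^ j *ᵥ x) := by
  have hsplit : z • M = (z * μ) • 1 + z • (M - μ • 1) := by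
    rw [smul_sub, smul_smul, add_sub_cancel]
  have hzk : (z • (M - μ • 1)) ^ k *ᵥ x = 0 := by
    rw [smul_pow, smul_mulVec, hk, smul_zero]
  rw [hsplit, exp_add_of_commute _ _ ((Commute.one_left _).smul_left _), exp_smul_one,
    ← mulVec_mulVec, exp_mulVec_eq_sum_of_pow_mulVec_eq_zero hzk, smul_mulVec, one_mulVec,
    smul_sum]
  refine sum_congr rfl fun j _ => ?_
  rw [smul_pow, smul_mulVec, smul_smul, smul_smul]
  ring_nf

theorem tendsto_exp_smul_mulVec_of_pow_sub_smul_mulVec_eq_zero {M : Matrix ι ι ℂ} {μ : ℂ}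
    (hμ : μ.re < 0) {x : ι → ℂ} {k : ℕ} (hk : (M - μ • 1) ^ k *ᵥ x = 0) :
    Tendsto (fun t : ℝ => exp (t • M) *ᵥ x) atTop (𝓝 0) := by
  have hexp : ∀ t : ℝ, exp (t • M) *ᵥ x = ∑ j ∈ range k,
      (Complex.exp (t * μ) * (t : ℂ) ^ j / j.factorial) • ((M - μ • 1) ^ j *ᵥ x) := fun t => by
    rw [← Complex.coe_smul, exp_smul_mulVec_of_pow_sub_smul_mulVec_eq_zero hk]
  simp_rw [hexp]
  simpa using tendsto_finsetSum (range k) fun j _ =>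
    ((Complex.tendsto_exp_mul_mul_pow hμ j).div_const (j.factorial : ℂ)).smul_const
      ((M - μ • 1) ^ j *ᵥ x)

theorem tendsto_exp_smul_mulVec_of_spectrum_re_neg {M : Matrix ι ι ℂ}
    (hM : ∀ μ ∈ spectrum ℂ M, μ.re < 0) (x : ι → ℂ) :
    Tendsto (fun t : ℝ => exp (t • M) *ᵥ x) atTop (𝓝 0) := by
  let f : Module.End ℂ (ι → ℂ) := toLinAlgEquiv' M
  have hx : x ∈ ⨆ μ, Module.End.maxGenEigenspace f μ := by
    rw [Module.End.iSup_maxGenEigenspace_eq_top]; trivial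
  induction hx using Submodule.iSup_induction' with
  | mem μ x hx =>
    obtain ⟨k, hk⟩ := (Module.End.mem_maxGenEigenspace _ _ _).1 hx
    have hk' : (M - μ • 1) ^ k *ᵥ x = 0 := by
      rwa [← toLinAlgEquiv'_apply, map_pow, map_sub, map_smul, map_one]
    by_cases hx0 : x = 0
    · simp [hx0]
    refine tendsto_exp_smul_mulVec_of_pow_sub_smul_mulVec_eq_zero (hM μ ?_) hk'
    have hgen : f.HasGenEigenvalue μ k :=
      Module.End.hasGenEigenvalue_iff.2 <| (Submodule.ne_bot_iff _).2
        ⟨x, Module.End.mem_genEigenspace_nat.2 hk, hx0⟩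
    rw [← AlgEquiv.spectrum_eq toLinAlgEquiv' M]
    exact Module.End.hasEigenvalue_iff_mem_spectrum.1
      (Module.End.hasEigenvalue_of_hasGenEigenvalue hgen)
  | zero => simp
  | add x y _ _ hx hy => simpa [mulVec_add] using hx.add hy

theorem map_ofReal_exp (M : Matrix ι ι ℝ) :
    (exp M).map Complex.ofReal = exp (M.map Complex.ofReal) := by
  let _ : NormedRing (Matrix ι ι ℝ) := Matrix.linftyOpNormedRing
  let _ : NormedAlgebra ℝ (Matrix ι ι ℝ) := Matrix.linftyOpNormedAlgebra
  let _ : NormedAlgebra ℚ (Matrix ι ι ℝ) := Matrix.linftyOpNormedAlgebra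
  let _ : NormedRing (Matrix ι ι ℂ) := Matrix.linftyOpNormedRing
  let f : Matrix ι ι ℝ →ₐ[ℝ] Matrix ι ι ℂ := Complex.ofRealAm.mapMatrix
  exact map_exp f f.toLinearMap.continuous_of_finiteDimensional M

theorem hasDerivAt_exp_smul_mulVec (M : Matrix ι ι ℝ) (v : ι → ℝ) (t : ℝ) :
    HasDerivAt (fun s : ℝ => exp (s • M) *ᵥ v) (M *ᵥ (exp (t • M) *ᵥ v)) t := by
  let _ : NormedRing (Matrix ι ι ℝ) := Matrix.linftyOpNormedRing
  let _ : NormedAlgebra ℝ (Matrix ι ι ℝ) := Matrix.linftyOpNormedAlgebra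
  let L : Matrix ι ι ℝ →L[ℝ] ι → ℝ :=
    LinearMap.toContinuousLinearMap ((LinearMap.applyₗ v).comp toLin'.toLinearMap)
  rw [mulVec_mulVec]
  exact L.hasFDerivAt.comp_hasDerivAt t (hasDerivAt_exp_smul_const' M t)

theorem hasDerivAt_exp_smul_mulVec_dotProduct_mulVec (M X : Matrix ι ι ℝ) (v : ι → ℝ)
    (t : ℝ) :
    HasDerivAt (fun s : ℝ => (exp (s • M) *ᵥ v) ⬝ᵥ X *ᵥ (exp (s • M) *ᵥ v))
      ((exp (t • M) *ᵥ v) ⬝ᵥ (Mᵀ * X + X * M) *ᵥ (exp (t • M) *ᵥ v)) t := by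
  have hx := hasDerivAt_exp_smul_mulVec M v t
  refine (hx.dotProduct (hx.const_mulVec X)).congr_deriv ?_
  rw [add_mulVec, dotProduct_add, ← mulVec_mulVec, ← mulVec_mulVec, dotProduct_mulVec _ Mᵀ,
    vecMul_transpose]

theorem lyapunov_sub_riccati {α n m : Type*} [CommRing α] [Fintype n] [Fintype m]
    {A P P' Q : Matrix n n α} {B : Matrix n m α} {R : Matrix m m α} {K K' : Matrix m n α}
    (hRK : R * K' = -(Bᵀ * P')) (hKR : K'ᵀ * R = -(P' * B)) :
    (A + B * K)ᵀ * (P - P') + (P - P') * (A + B * K) + (K - K')ᵀ * R * (K - K') =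
      ((A + B * K)ᵀ * P + P * (A + B * K) + Q + Kᵀ * R * K) -
        (Aᵀ * P' + P' * A + Q - K'ᵀ * R * K') := by
  have hcross : (K - K')ᵀ * R * (K - K') =
      Kᵀ * R * K + Kᵀ * (Bᵀ * P') + P' * B * K + K'ᵀ * R * K' := by
    rw [transpose_sub, Matrix.sub_mul, Matrix.sub_mul, Matrix.mul_sub, Matrix.mul_sub,
      Matrix.mul_assoc Kᵀ R K', hRK, hKR, Matrix.mul_neg, Matrix.neg_mul]
    abel
  rw [hcross]
  simp only [transpose_add, transpose_mul, Matrix.add_mul, Matrix.mul_add, Matrix.sub_mul,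
    Matrix.mul_sub, Matrix.mul_assoc]
  abel

end Matrix

section Hurwitz

variable {ι : Type*} [Fintype ι] [DecidableEq ι] {M : Matrix ι ι ℝ}

theorem IsHurwitz.tendsto_exp_smul_mulVec (hM : IsHurwitz M) (v : ι → ℝ) :
    Tendsto (fun t : ℝ => exp (t • M) *ᵥ v) atTop (𝓝 0) := by
  have hre : Continuous fun w : ι → ℂ => fun i => (w i).re := by fun_prop
  convert (hre.tendsto 0).comp
    (tendsto_exp_smul_mulVec_of_spectrum_re_neg hM (Complex.ofReal ∘ v)) using 2 with t
  · ext i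
    have hmap : t • M.map Complex.ofReal = (t • M).map Complex.ofReal := by ext; simp
    rw [Function.comp_apply, hmap, ← map_ofReal_exp]
    exact (Complex.ofReal_re _).symm.trans
      (congrArg Complex.re (RingHom.map_mulVec Complex.ofRealHom _ v i))
  · ext; simp

theorem IsHurwitz.posSemidef_of_lyapunov_s17 {X C : Matrix ι ι ℝ} (hM : IsHurwitz M)
    (hX : X.IsHermitian) (hC : C.PosSemidef) (hLyap : Mᵀ * X + X * M + C = 0) :
    X.PosSemidef := by
  refine posSemidef_iff_dotProduct_mulVec.2 ⟨hX, fun v => ?_⟩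
  have hq := hasDerivAt_exp_smul_mulVec_dotProduct_mulVec M X v
  have hMX : Mᵀ * X + X * M = -C := eq_neg_of_add_eq_zero_left hLyap
  have hanti : Antitone fun s : ℝ => (exp (s • M) *ᵥ v) ⬝ᵥ X *ᵥ (exp (s • M) *ᵥ v) := by
    refine antitone_of_deriv_nonpos (fun t => (hq t).differentiableAt) fun t => ?_
    rw [(hq t).deriv, hMX, neg_mulVec, dotProduct_neg, neg_nonpos]
    simpa using hC.dotProduct_mulVec_nonneg (exp (t • M) *ᵥ v)
  have hcont : Continuous fun y : ι → ℝ => y ⬝ᵥ X *ᵥ y := by fun_prop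
  have hlim := (hcont.tendsto' 0 0 (by simp)).comp (hM.tendsto_exp_smul_mulVec v)
  simpa using hanti.le_of_tendsto hlim 0

end Hurwitz

theorem stmt_17_general {n m : ℕ}
    (A : Matrix (Fin n) (Fin n) ℝ) (B : Matrix (Fin n) (Fin m) ℝ)
    (Q : Matrix (Fin n) (Fin n) ℝ) (R : Matrix (Fin m) (Fin m) ℝ)
    (hR : R.PosDef)
    (Pstar : Matrix (Fin n) (Fin n) ℝ) (hPstar : Pstar.PosDef)
    (hARE : Aᵀ * Pstar + Pstar * A + Q - Pstar * B * R⁻¹ * Bᵀ * Pstar = 0)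
    (Kstar : Matrix (Fin m) (Fin n) ℝ) (hKstar : Kstar = -(R⁻¹ * Bᵀ * Pstar))
    (K : Matrix (Fin m) (Fin n) ℝ) (hK : IsHurwitz (A + B * K))
    (P : Matrix (Fin n) (Fin n) ℝ) (hP : P.IsHermitian)
    (hLyap : (A + B * K)ᵀ * P + P * (A + B * K) + Q + Kᵀ * R * K = 0) :
    (A + B * K)ᵀ * (P - Pstar) + (P - Pstar) * (A + B * K)
        + (K - Kstar)ᵀ * R * (K - Kstar) = 0 ∧
      (P - Pstar).PosSemidef := by
  have hRK : R * Kstar = -(Bᵀ * Pstar) := by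
    rw [hKstar, Matrix.mul_neg, ← Matrix.mul_assoc, ← Matrix.mul_assoc,
      R.mul_nonsing_inv hR.det_pos.ne'.isUnit, Matrix.one_mul]
  have hKR : Kstarᵀ * R = -(Pstar * B) := by
    have hRT : Rᵀ = R := hR.isHermitian.eq
    have hPT : Pstarᵀ = Pstar := hPstar.isHermitian.eq
    simpa [transpose_mul, hRT, hPT] using congrArg transpose hRK
  have hKRK : Kstarᵀ * R * Kstar = Pstar * B * R⁻¹ * Bᵀ * Pstar := by
    rw [hKR, hKstar]; simp [Matrix.mul_assoc]
  have hgap := Matrix.lyapunov_sub_riccati (A := A) (P := P) (Q := Q) (K := K) hRK hKR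
  rw [hLyap, hKRK, hARE, sub_zero] at hgap
  refine ⟨hgap, hK.posSemidef_of_lyapunov_s17 (hP.sub hPstar.isHermitian) ?_ hgap⟩
  simpa using hR.posSemidef.conjTranspose_mul_mul_same (K - Kstar)

/-- the gap P − P⋆ solves a Lyapunov equation, hence P ⪰ P⋆. -/
theorem stmt_17 {n m : ℕ} (hn : 0 < n) (hm : 0 < m)
    (A : Matrix (Fin n) (Fin n) ℝ) (B : Matrix (Fin n) (Fin m) ℝ)
    (Q : Matrix (Fin n) (Fin n) ℝ) (R : Matrix (Fin m) (Fin m) ℝ)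
    (hQ : Q.PosDef) (hR : R.PosDef)
    (Pstar : Matrix (Fin n) (Fin n) ℝ) (hPstar : Pstar.PosDef)
    (hARE : Aᵀ * Pstar + Pstar * A + Q - Pstar * B * R⁻¹ * Bᵀ * Pstar = 0)
    (hHurStar : IsHurwitz (A - B * R⁻¹ * Bᵀ * Pstar))
    (Kstar : Matrix (Fin m) (Fin n) ℝ) (hKstar : Kstar = -(R⁻¹ * Bᵀ * Pstar))
    (K : Matrix (Fin m) (Fin n) ℝ) (hK : IsHurwitz (A + B * K))
    (P : Matrix (Fin n) (Fin n) ℝ) (hP : P.IsHermitian)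
    (hLyap : (A + B * K)ᵀ * P + P * (A + B * K) + Q + Kᵀ * R * K = 0) :
    (A + B * K)ᵀ * (P - Pstar) + (P - Pstar) * (A + B * K)
        + (K - Kstar)ᵀ * R * (K - Kstar) = 0 ∧
      (P - Pstar).PosSemidef :=
  stmt_17_general A B Q R hR Pstar hPstar hARE Kstar hKstar K hK P hP hLyap
end
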